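/- arXiv:1906.04339 — 3 statements merged into one kernel-verified Lean document; each statement's English description precedes it below -/
import Mathlib

section
/- For every integer n ≥ 2, the sum over i = 1, …, n−1 of the reciprocals of the nonzero Laplacian eigenvalues of the n-cycle satisfies ∑_{i=1}^{n−1} 1/(4·sin²(iπ/n)) = (n² − 1)/12. (Equivalently, the Kirchhoff index of C_n, which equals n times this sum, is (n³ − n)/12.) -/
/-!
With `ζ = exp (2πi/n)` and `0 < k < n`, one has `4 sin² (kπ/n) = -(ζᵏ - 1)² / ζᵏ`, while the
closed forms of `∑ j ωʲ` and `∑ j² ωʲ` give `(ω - 1)² ∑_{j<n} j (n - j) ωʲ = 2nω` for every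
`ω ≠ 1` with `ωⁿ = 1`. Hence `1 / (4 sin² (kπ/n)) = -F(k) / 2n`, where `F` is the discrete
Fourier transform of `j ↦ j (n - j)`. Fourier inversion at `0` gives `∑_{k<n} F(k) = n · 0 = 0`,
so the sum of `F` over `k ≠ 0` is `-F(0) = -∑_{j<n} j (n - j) = -n (n² - 1) / 6`.
-/

open Finset Complex
open scoped Real

section GeomSum

variable {R : Type*} [CommRing R]

theorem sub_one_mul_sum_range_natCast_mul_pow (x : R) (n : ℕ) :
    (x - 1) * ∑ j ∈ range n, (j : R) * x ^ j =
      ((n : R) - 1) * x ^ n - ∑ j ∈ range n, x ^ j + 1 := by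
  induction n with
  | zero => simp
  | succ n ih =>
    rw [sum_range_succ, sum_range_succ (fun j => x ^ j)]
    push_cast
    linear_combination ih

theorem sub_one_mul_sum_range_natCast_sq_mul_pow (x : R) (n : ℕ) :
    (x - 1) * ∑ j ∈ range n, (j : R) ^ 2 * x ^ j =
      ((n : R) - 1) ^ 2 * x ^ n - 2 * ∑ j ∈ range n, (j : R) * x ^ j +
        ∑ j ∈ range n, x ^ j - 1 := by
  induction n with
  | zero => simp
  | succ n ih =>
    rw [sum_range_succ, sum_range_succ (fun j => x ^ j),
      sum_range_succ (fun j => (j : R) * x ^ j)]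
    push_cast
    linear_combination ih

theorem sub_one_sq_mul_sum_range_mul_sub_mul_pow {x : R} {n : ℕ}
    (hx : ∑ j ∈ range n, x ^ j = 0) :
    (x - 1) ^ 2 * ∑ j ∈ range n, (j : R) * (n - j) * x ^ j = 2 * n * x := by
  have hxn : x ^ n = 1 := by rw [← sub_eq_zero, ← geom_sum_mul, hx, zero_mul]
  have hB := sub_one_mul_sum_range_natCast_mul_pow x n
  have hC := sub_one_mul_sum_range_natCast_sq_mul_pow x n
  rw [hxn, hx] at hB hC
  have hsplit : ∑ j ∈ range n, (j : R) * (n - j) * x ^ j =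
      n * ∑ j ∈ range n, (j : R) * x ^ j - ∑ j ∈ range n, (j : R) ^ 2 * x ^ j := by
    rw [mul_sum, ← sum_sub_distrib]
    exact sum_congr rfl fun j _ => by ring
  rw [hsplit]
  linear_combination ((n : R) * (x - 1) + 2) * hB - (x - 1) * hC

theorem six_mul_sum_range_mul_sub (a : R) (n : ℕ) :
    6 * ∑ j ∈ range n, (j : R) * (a - j) = n * (n - 1) * (3 * a - 2 * n + 1) := by
  induction n with
  | zero => simp
  | succ n ih =>
    rw [sum_range_succ, mul_add, ih]
    push_cast
    ring

end GeomSum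

namespace IsPrimitiveRoot

variable {R : Type*} [CommRing R] [IsDomain R] {ζ : R} {n : ℕ}

theorem geom_sum_pow_eq_zero (hζ : IsPrimitiveRoot ζ n) {j : ℕ} (hj0 : j ≠ 0) (hjn : j < n) :
    ∑ k ∈ range n, (ζ ^ j) ^ k = 0 := by
  refine eq_zero_of_ne_zero_of_mul_left_eq_zero
    (sub_ne_zero_of_ne (hζ.pow_ne_one_of_pos_of_lt hj0 hjn).symm) ?_
  rw [mul_neg_geom_sum, pow_right_comm, hζ.pow_eq_one, one_pow, sub_self]

theorem sum_range_sum_range_mul_pow_pow (hζ : IsPrimitiveRoot ζ n) (f : ℕ → R) :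
    ∑ k ∈ range n, ∑ j ∈ range n, f j * (ζ ^ k) ^ j = n * f 0 := by
  rw [sum_comm]
  simp_rw [pow_right_comm ζ _ (_ : ℕ), ← mul_sum]
  rw [sum_eq_single 0]
  · simp [mul_comm]
  · intro j hj hj0
    rw [hζ.geom_sum_pow_eq_zero hj0 (mem_range.mp hj), mul_zero]
  · intro h0
    simp [show n = 0 by simpa using h0]

end IsPrimitiveRoot

namespace Complex

theorem exp_two_mul_mul_I_sub_one_sq (z : ℂ) :
    (exp (2 * z * I) - 1) ^ 2 = -4 * sin z ^ 2 * exp (2 * z * I) := by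
  rw [sin]
  set e := exp (z * I)
  set f := exp (-z * I)
  have hef : e * f = 1 := by rw [← exp_add]; ring_nf; exact exp_zero
  have he2 : exp (2 * z * I) = e ^ 2 := by rw [← exp_nat_mul]; ring_nf
  rw [he2]
  linear_combination (e ^ 2 * (f - e) ^ 2) * I_sq + (2 * e ^ 2 - 1 - e * f) * hef

theorem four_mul_sin_sq_mul_sum_range_mul_sub_mul_exp {z : ℂ} {n : ℕ}
    (h : ∑ j ∈ range n, exp (2 * z * I) ^ j = 0) :
    4 * sin z ^ 2 * ∑ j ∈ range n, (j : ℂ) * (n - j) * exp (2 * z * I) ^ j = -(2 * n) := by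
  have hS := sub_one_sq_mul_sum_range_mul_sub_mul_pow h
  rw [exp_two_mul_mul_I_sub_one_sq] at hS
  exact mul_right_cancel₀ (exp_ne_zero (2 * z * I)) (by linear_combination -hS)

theorem exp_two_pi_mul_I_div_pow (n k : ℕ) :
    exp (2 * π * I / n) ^ k = exp (2 * (k * π / n : ℂ) * I) := by
  rw [← exp_nat_mul]
  ring_nf

end Complex

theorem Real.sin_nat_mul_pi_div_pos {n k : ℕ} (hk0 : k ≠ 0) (hkn : k < n) :
    0 < Real.sin (k * π / n) := by
  have hk : (0 : ℝ) < k := by exact_mod_cast Nat.pos_of_ne_zero hk0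
  have hkn' : (k : ℝ) < n := by exact_mod_cast hkn
  have hn : (0 : ℝ) < n := hk.trans hkn'
  rw [mul_div_right_comm]
  exact Real.sin_pos_of_pos_of_lt_pi (by positivity)
    (mul_lt_of_lt_one_left Real.pi_pos ((div_lt_one hn).mpr hkn'))

theorem one_div_four_mul_sin_sq_nat_mul_pi_div {n k : ℕ} (hk0 : k ≠ 0) (hkn : k < n) :
    1 / (4 * Complex.sin (k * π / n) ^ 2) =
      -(2 * (n : ℂ))⁻¹ * ∑ j ∈ range n, (j : ℂ) * (n - j) * (exp (2 * π * I / n) ^ k) ^ j := by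
  have hgeom := (isPrimitiveRoot_exp n (by omega)).geom_sum_pow_eq_zero hk0 hkn
  rw [exp_two_pi_mul_I_div_pow] at hgeom ⊢
  have hS := four_mul_sin_sq_mul_sum_range_mul_sub_mul_exp hgeom
  have hsin : Complex.sin (k * π / n) ≠ 0 := by
    exact_mod_cast (Real.sin_nat_mul_pi_div_pos hk0 hkn).ne'
  have hn : (n : ℂ) ≠ 0 := by exact_mod_cast (by omega : n ≠ 0)
  generalize ∑ j ∈ range n, (j : ℂ) * (n - j) * exp (2 * (k * π / n : ℂ) * I) ^ j = S at hS ⊢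
  field_simp
  linear_combination hS

/-- For every integer `n ≥ 2`, the sum of the reciprocals of the nonzero
Laplacian eigenvalues `4·sin²(iπ/n)`, `i = 1, …, n−1`, of the cycle `C_n` equals
`(n² − 1)/12`. -/
theorem sum_reciprocal_lap_eigenvalues_cycle (n : ℕ) (hn : 2 ≤ n) :
    ∑ i ∈ Finset.Ico 1 n, 1 / (4 * Real.sin (i * Real.pi / n) ^ 2) =
      ((n : ℝ) ^ 2 - 1) / 12 := by
  set F : ℕ → ℂ := fun k => ∑ j ∈ range n, (j : ℂ) * (n - j) * (exp (2 * π * I / n) ^ k) ^ j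
  have hF : F 0 + ∑ k ∈ Ico 1 n, F k = 0 := by
    rw [← sum_range_eq_add_Ico _ (by omega),
      (isPrimitiveRoot_exp n (by omega)).sum_range_sum_range_mul_pow_pow]
    simp
  have hF0 : 6 * F 0 = n * (n ^ 2 - 1) := by
    simp only [F, pow_zero, one_pow, mul_one]
    rw [six_mul_sum_range_mul_sub]
    ring
  have hn0 : (n : ℂ) ≠ 0 := by exact_mod_cast (by omega : n ≠ 0)
  apply ofReal_injective
  push_cast
  rw [sum_congr rfl fun k hk => one_div_four_mul_sin_sq_nat_mul_pi_div
    (Nat.one_le_iff_ne_zero.mp (mem_Ico.mp hk).1) (mem_Ico.mp hk).2, ← mul_sum]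
  simp only [F] at hF hF0
  field_simp
  linear_combination 2 * hF0 - 12 * hF
end

section
/- For every integer n ≥ 3, the characteristic polynomial of the Laplacian matrix of G_n factors as char(L(G_n)) = char(2·L(C_n)) · (X − 6)^n in ℝ[X]; that is, the Laplacian spectrum of G_n consists of twice each Laplacian eigenvalue of C_n together with the eigenvalue 6 with multiplicity n. -/
/-!
Order the vertices of `G ⊠ K₂` layer by layer. With `D` and `A` the degree and adjacency matrices
of `G`, its Laplacian becomes the block matrix `[[M, N], [N, M]]` with `M = 2D + 1 - A` and
`N = -(A + 1)`, and a block unitriangular change of basis turns this into `[[M + N, 0], [N, M - N]]`.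
Here `M + N = 2 L(G)` and `M - N = 2 (D + 1)`, which is `6` for a cycle.
-/

open Polynomial

/-- The graph `G_n = P₂ ⊠ C_n`: vertex set `(ZMod n) × Fin 2`, where two distinct vertices
`(i,a)` and `(j,b)` are adjacent iff `i = j` or `i = j + 1` or `j = i + 1` in `ZMod n`. -/
def Gn (n : ℕ) : SimpleGraph (ZMod n × Fin 2) where
  Adj x y := x ≠ y ∧ (x.1 = y.1 ∨ x.1 = y.1 + 1 ∨ y.1 = x.1 + 1)
  symm := by
    refine ⟨?_⟩
    rintro x y ⟨hne, h | h | h⟩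
    · exact ⟨hne.symm, Or.inl h.symm⟩
    · exact ⟨hne.symm, Or.inr (Or.inr h)⟩
    · exact ⟨hne.symm, Or.inr (Or.inl h)⟩
  loopless := by refine ⟨?_⟩; rintro x ⟨hne, -⟩; exact hne rfl

instance (n : ℕ) : DecidableRel (Gn n).Adj :=
  fun _ _ => inferInstanceAs (Decidable (_ ∧ _))

namespace Matrix

variable {n R : Type*} [Fintype n] [DecidableEq n] [CommRing R]

theorem charpoly_fromBlocks_self_swap (M N : Matrix n n R) :
    (fromBlocks M N N M).charpoly = (M + N).charpoly * (M - N).charpoly := by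
  have hconj : fromBlocks M N N M =
      fromBlocks 1 (-1) 0 1 * fromBlocks (M + N) 0 N (M - N) * fromBlocks 1 1 0 1 := by
    simp only [fromBlocks_multiply, Matrix.one_mul, Matrix.mul_one, Matrix.zero_mul,
      Matrix.mul_zero, Matrix.neg_mul, add_zero, zero_add]
    congr 1 <;> abel
  have hinv : (fromBlocks 1 1 0 1 * fromBlocks 1 (-1) 0 1 : Matrix (n ⊕ n) (n ⊕ n) R) = 1 := by
    simp [fromBlocks_multiply, ← fromBlocks_one]
  rw [hconj, charpoly_mul_comm, ← mul_assoc, hinv, Matrix.one_mul, charpoly_fromBlocks_zero₁₂]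

end Matrix

namespace Equiv

def prodFinTwoEquivSum (α : Type*) : α × Fin 2 ≃ α ⊕ α :=
  (prodComm α (Fin 2)).trans ((finTwoEquiv.prodCongr (Equiv.refl α)).trans (boolProdEquivSum α))

@[simp]
theorem prodFinTwoEquivSum_symm_inl {α : Type*} (a : α) :
    (prodFinTwoEquivSum α).symm (Sum.inl a) = (a, 0) :=
  rfl

@[simp]
theorem prodFinTwoEquivSum_symm_inr {α : Type*} (a : α) :
    (prodFinTwoEquivSum α).symm (Sum.inr a) = (a, 1) :=
  rfl

end Equiv

namespace SimpleGraph

variable {α β : Type*}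

def strongProd (G : SimpleGraph α) (H : SimpleGraph β) : SimpleGraph (α × β) where
  Adj x y := x ≠ y ∧ (x.1 = y.1 ∨ G.Adj x.1 y.1) ∧ (x.2 = y.2 ∨ H.Adj x.2 y.2)
  symm.symm x y := by
    rintro ⟨hne, h₁, h₂⟩
    exact ⟨hne.symm, h₁.imp Eq.symm Adj.symm, h₂.imp Eq.symm Adj.symm⟩
  loopless := ⟨fun _ h => h.1 rfl⟩

infixl:70 " ⊠ " => strongProd

variable {G : SimpleGraph α} {H : SimpleGraph β}

@[simp]
theorem strongProd_adj {x y : α × β} :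
    (G ⊠ H).Adj x y ↔ x ≠ y ∧ (x.1 = y.1 ∨ G.Adj x.1 y.1) ∧ (x.2 = y.2 ∨ H.Adj x.2 y.2) :=
  Iff.rfl

instance [DecidableEq α] [DecidableEq β] [DecidableRel G.Adj] [DecidableRel H.Adj] :
    DecidableRel (G ⊠ H).Adj :=
  fun _ _ => inferInstanceAs (Decidable (_ ∧ _))

section Finite

variable [Fintype α] [Fintype β] [DecidableEq α] [DecidableEq β]
  [DecidableRel G.Adj] [DecidableRel H.Adj]

theorem neighborFinset_strongProd (x : α × β) :
    (G ⊠ H).neighborFinset x =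
      (insert x.1 (G.neighborFinset x.1) ×ˢ insert x.2 (H.neighborFinset x.2)).erase x := by
  ext y
  simp only [mem_neighborFinset, strongProd_adj, Finset.mem_erase, Finset.mem_product,
    Finset.mem_insert, eq_comm (a := y.1), eq_comm (a := y.2), ne_comm (a := y)]

theorem degree_strongProd_add_one (x : α × β) :
    (G ⊠ H).degree x + 1 = (G.degree x.1 + 1) * (H.degree x.2 + 1) := by
  rw [← card_neighborFinset_eq_degree, neighborFinset_strongProd,
    Finset.card_erase_add_one (by simp), Finset.card_product,
    Finset.card_insert_of_notMem (by simp), Finset.card_insert_of_notMem (by simp)]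
  rfl

end Finite

section StrongProdTopFinTwo

open Matrix

variable {V : Type*} [Fintype V] [DecidableEq V] (G : SimpleGraph V) [DecidableRel G.Adj]

theorem degree_strongProd_top_fin_two (x : V × Fin 2) :
    (G ⊠ (⊤ : SimpleGraph (Fin 2))).degree x = 2 * G.degree x.1 + 1 := by
  have h := degree_strongProd_add_one (G := G) (H := (⊤ : SimpleGraph (Fin 2))) x
  simp only [complete_graph_degree, Fintype.card_fin] at h
  omega

theorem reindex_lapMatrix_strongProd_top_fin_two (R : Type*) [Ring R] :
    reindex (Equiv.prodFinTwoEquivSum V) (Equiv.prodFinTwoEquivSum V)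
        ((G ⊠ (⊤ : SimpleGraph (Fin 2))).lapMatrix R) =
      fromBlocks ((2 : R) • G.degMatrix R + 1 - G.adjMatrix R) (-(G.adjMatrix R + 1))
        (-(G.adjMatrix R + 1)) ((2 : R) • G.degMatrix R + 1 - G.adjMatrix R) := by
  ext (i | i) (j | j) <;> by_cases hij : i = j <;>
    simp [lapMatrix, degMatrix, degree_strongProd_top_fin_two, one_apply, hij]

theorem charpoly_lapMatrix_strongProd_top_fin_two (R : Type*) [CommRing R] :
    ((G ⊠ (⊤ : SimpleGraph (Fin 2))).lapMatrix R).charpoly =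
      ((2 : R) • G.lapMatrix R).charpoly * ∏ v, (X - C (2 * (G.degree v + 1) : R)) := by
  have hsum : (2 : R) • G.degMatrix R + 1 - G.adjMatrix R + -(G.adjMatrix R + 1) =
      (2 : R) • G.lapMatrix R := by
    rw [lapMatrix]
    module
  have hdiff : (2 : R) • G.degMatrix R + 1 - G.adjMatrix R - -(G.adjMatrix R + 1) =
      diagonal fun v => (2 * (G.degree v + 1) : R) := by
    ext i j
    by_cases hij : i = j
    · subst hij
      simp [degMatrix]
      ring
    · simp [degMatrix, one_apply, hij]
  rw [← charpoly_reindex (Equiv.prodFinTwoEquivSum V), reindex_lapMatrix_strongProd_top_fin_two,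
    charpoly_fromBlocks_self_swap, hsum, hdiff, charpoly_diagonal]

end StrongProdTopFinTwo

theorem Gn_eq_cycleGraph_strongProd_top (n : ℕ) :
    Gn (n + 2) = cycleGraph (n + 2) ⊠ (⊤ : SimpleGraph (Fin 2)) := by
  ext x y
  -- `ZMod (n + 2)` unfolds to `Fin (n + 2)`, where `cycleGraph` is defined by differences.
  change _ ↔ x ≠ y ∧ (x.1 = y.1 ∨ x.1 - y.1 = 1 ∨ y.1 - x.1 = 1) ∧ (x.2 = y.2 ∨ x.2 ≠ y.2)
  simp [Gn, sub_eq_iff_eq_add', em]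

end SimpleGraph

open SimpleGraph in
/-- For every integer `n ≥ 3`, the characteristic polynomial of the Laplacian
matrix of `G_n` factors as `char(L(G_n)) = char(2·L(C_n)) · (X − 6)^n` over `ℝ`. -/
theorem charpoly_lapMatrix_Gn_factorization (n : ℕ) [NeZero n] (hn : 3 ≤ n) :
    ((Gn n).lapMatrix ℝ).charpoly =
      ((2 : ℝ) • (SimpleGraph.cycleGraph n).lapMatrix ℝ).charpoly *
        (X - C (6 : ℝ)) ^ n := by
  obtain ⟨m, rfl⟩ := Nat.exists_eq_add_of_le' hn
  have hL : (Gn (m + 3)).lapMatrix ℝ = (cycleGraph (m + 3) ⊠ ⊤).lapMatrix ℝ := by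
    congr 1
    exact Gn_eq_cycleGraph_strongProd_top (m + 1)
  rw [hL]
  refine (charpoly_lapMatrix_strongProd_top_fin_two _ ℝ).trans ?_
  simp only [cycleGraph_degree_three_le, Finset.prod_const, Finset.card_univ, Fintype.card_fin]
  norm_num
end

section
/- For every integer n ≥ 3, the Kirchhoff index of G_n, which equals |V(G_n)| times the sum of the reciprocals of the nonzero Laplacian eigenvalues of G_n, satisfies Kf(G_n) = 2n·( ∑_{i=1}^{n−1} 1/(8·sin²(iπ/n)) + n/6 ) = (n³ + 4n² − n)/12. -/
/-! Everything reduces to `∑_{i=1}^{n-1} 1 / sin² (iπ/n) = (n² - 1)/3`. With `ζ = e^{2πi/n}` one has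
`4 sin² (iπ/n) = (1 - ζ^i)(1 - ζ^{-i})`, and for an `n`-th root of unity `x ≠ 1` the identity
`(1 - x) ∑_{k<n} k x^k = -n` turns each term into `f(ζ^i) f(ζ^{-i}) / n²` with `f = ∑_{k<n} k X^k`.
Parseval's identity for the discrete Fourier transform gives `∑_{i<n} f(ζ^i) f(ζ^{-i}) = n ∑_{k<n} k²`;
removing the `i = 0` term `(∑_{k<n} k)²` leaves `n² (n² - 1) / 12`. -/

open Finset

section SumRange

variable {R : Type*} [CommRing R]

theorem two_mul_sum_range_natCast (n : ℕ) : 2 * ∑ k ∈ range n, (k : R) = n * (n - 1) := by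
  induction n with
  | zero => simp
  | succ n ih => rw [sum_range_succ, mul_add, ih]; push_cast; ring

theorem six_mul_sum_range_natCast_sq (n : ℕ) :
    6 * ∑ k ∈ range n, (k : R) ^ 2 = n * (n - 1) * (2 * n - 1) := by
  induction n with
  | zero => simp
  | succ n ih => rw [sum_range_succ, mul_add, ih]; push_cast; ring

theorem one_sub_mul_sum_range_natCast_mul_pow (x : R) (n : ℕ) :
    (1 - x) * ∑ k ∈ range n, (k : R) * x ^ k = ∑ k ∈ range n, x ^ (k + 1) - n * x ^ n := by
  induction n with
  | zero => simp
  | succ n ih =>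
    rw [sum_range_succ, mul_add, ih, sum_range_succ]
    push_cast
    ring

end SumRange

section RootsOfUnity

variable {K : Type*} [Field K]

theorem one_sub_mul_sum_range_natCast_mul_pow_of_pow_eq_one {x : K} {n : ℕ} (hx : x ≠ 1)
    (hxn : x ^ n = 1) : (1 - x) * ∑ k ∈ range n, (k : K) * x ^ k = -n := by
  have hgeom : ∑ k ∈ range n, x ^ k = 0 := by rw [geom_sum_eq hx, hxn, sub_self, zero_div]
  simp only [one_sub_mul_sum_range_natCast_mul_pow, pow_succ, ← sum_mul, hgeom, hxn]
  ring

theorem inv_one_sub_mul_one_sub_inv_eq {x : K} {n : ℕ} (hn : (n : K) ≠ 0) (hx : x ≠ 1)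
    (hxn : x ^ n = 1) :
    ((1 - x) * (1 - x⁻¹))⁻¹ =
      (∑ k ∈ range n, (k : K) * x ^ k) * (∑ k ∈ range n, (k : K) * x⁻¹ ^ k) / n ^ 2 := by
  have hx' : x⁻¹ ≠ 1 := inv_ne_one.mpr hx
  have hxn' : x⁻¹ ^ n = 1 := by rw [inv_pow, hxn, inv_one]
  have hprod : (1 - x) * (1 - x⁻¹) ≠ 0 :=
    mul_ne_zero (sub_ne_zero.mpr hx.symm) (sub_ne_zero.mpr hx'.symm)
  rw [eq_div_iff (pow_ne_zero 2 hn), inv_mul_eq_iff_eq_mul₀ hprod, mul_mul_mul_comm,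
    one_sub_mul_sum_range_natCast_mul_pow_of_pow_eq_one hx hxn,
    one_sub_mul_sum_range_natCast_mul_pow_of_pow_eq_one hx' hxn']
  ring

theorem IsPrimitiveRoot.sum_range_pow_mul_inv_pow {ζ : K} {n k l : ℕ} (hζ : IsPrimitiveRoot ζ n)
    (hk : k < n) (hl : l < n) :
    ∑ i ∈ range n, (ζ ^ i) ^ k * (ζ ^ i)⁻¹ ^ l = if k = l then (n : K) else 0 := by
  have hζ0 : ζ ≠ 0 := hζ.ne_zero (by omega)
  have hpow : ∀ i, (ζ ^ i) ^ k * (ζ ^ i)⁻¹ ^ l = (ζ ^ k * (ζ ^ l)⁻¹) ^ i := fun i => by ring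
  simp only [hpow]
  split_ifs with hkl
  · subst hkl
    simp [hζ0]
  · have hne : ζ ^ k * (ζ ^ l)⁻¹ ≠ 1 := fun h =>
      hkl (hζ.pow_inj hk hl ((mul_inv_eq_one₀ (pow_ne_zero _ hζ0)).mp h))
    have hne_pow : (ζ ^ k * (ζ ^ l)⁻¹) ^ n = 1 := by
      rw [mul_pow, inv_pow, ← pow_mul, ← pow_mul, mul_comm k, mul_comm l, pow_mul, pow_mul,
        hζ.pow_eq_one, one_pow, one_pow, inv_one, mul_one]
    rw [geom_sum_eq hne, hne_pow, sub_self, zero_div]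

/-- Parseval's identity for the discrete Fourier transform. -/
theorem IsPrimitiveRoot.sum_range_mul_sum_range_pow_inv {ζ : K} {n : ℕ}
    (hζ : IsPrimitiveRoot ζ n) (a b : ℕ → K) :
    ∑ i ∈ range n, (∑ k ∈ range n, a k * (ζ ^ i) ^ k) * (∑ l ∈ range n, b l * (ζ ^ i)⁻¹ ^ l) =
      n * ∑ k ∈ range n, a k * b k := by
  calc ∑ i ∈ range n, (∑ k ∈ range n, a k * (ζ ^ i) ^ k) * (∑ l ∈ range n, b l * (ζ ^ i)⁻¹ ^ l)
      = ∑ k ∈ range n, ∑ l ∈ range n,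
          a k * b l * ∑ i ∈ range n, (ζ ^ i) ^ k * (ζ ^ i)⁻¹ ^ l := by
        simp_rw [sum_mul_sum, mul_sum]
        rw [sum_comm]
        refine sum_congr rfl fun k _ => ?_
        rw [sum_comm]
        exact sum_congr rfl fun l _ => sum_congr rfl fun i _ => by ring
    _ = ∑ k ∈ range n, ∑ l ∈ range n, if k = l then a k * b l * n else 0 := by
        refine sum_congr rfl fun k hk => sum_congr rfl fun l hl => ?_
        rw [hζ.sum_range_pow_mul_inv_pow (mem_range.mp hk) (mem_range.mp hl), mul_ite, mul_zero]
    _ = n * ∑ k ∈ range n, a k * b k := by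
        rw [mul_sum]
        exact sum_congr rfl fun k hk => by rw [sum_ite_eq, if_pos hk, mul_comm]

theorem IsPrimitiveRoot.sum_Ico_inv_one_sub_mul_one_sub_inv [CharZero K] {ζ : K} {n : ℕ}
    (hζ : IsPrimitiveRoot ζ n) (hn : 0 < n) :
    ∑ i ∈ Ico 1 n, ((1 - ζ ^ i) * (1 - (ζ ^ i)⁻¹))⁻¹ = ((n : K) ^ 2 - 1) / 12 := by
  have hnK : (n : K) ≠ 0 := Nat.cast_ne_zero.mpr hn.ne'
  have hterm : ∀ i ∈ Ico 1 n, ((1 - ζ ^ i) * (1 - (ζ ^ i)⁻¹))⁻¹ =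
      (∑ k ∈ range n, (k : K) * (ζ ^ i) ^ k) * (∑ k ∈ range n, (k : K) * (ζ ^ i)⁻¹ ^ k) / n ^ 2 :=
    fun i hi => inv_one_sub_mul_one_sub_inv_eq hnK
      (hζ.pow_ne_one_of_pos_of_lt (Nat.one_le_iff_ne_zero.mp (mem_Ico.mp hi).1) (mem_Ico.mp hi).2)
      (by rw [← pow_mul, mul_comm, pow_mul, hζ.pow_eq_one, one_pow])
  have hparseval := hζ.sum_range_mul_sum_range_pow_inv (fun k => (k : K)) (fun k => (k : K))
  rw [range_eq_Ico, sum_eq_sum_Ico_succ_bot hn, ← range_eq_Ico] at hparseval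
  simp only [zero_add, pow_zero, one_pow, inv_one, mul_one, ← sq] at hparseval
  rw [sum_congr rfl hterm, ← sum_div, div_eq_iff (pow_ne_zero 2 hnK)]
  linear_combination hparseval + (n / 6) * six_mul_sum_range_natCast_sq (R := K) n -
    ((2 * ∑ k ∈ range n, (k : K) + n * (n - 1)) / 4) * two_mul_sum_range_natCast (R := K) n

end RootsOfUnity

open Complex in
theorem Complex.one_sub_exp_mul_one_sub_inv_exp (z : ℂ) :
    (1 - exp (2 * z * I)) * (1 - (exp (2 * z * I))⁻¹) = 4 * sin z ^ 2 := by
  have hsq : ∀ w : ℂ, exp (2 * w) = exp w * exp w := fun w => by rw [← exp_add, two_mul]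
  have hinv : exp (z * I) * exp (-z * I) = 1 := by rw [← exp_add]; simp
  rw [← exp_neg, show -(2 * z * I) = 2 * (-z * I) by ring, mul_assoc, hsq, hsq, sin]
  linear_combination (exp (z * I) * exp (-z * I) - 1) * hinv -
    (exp (-z * I) - exp (z * I)) ^ 2 * I_sq

open Real in
theorem Real.sum_Ico_one_div_sin_sq {n : ℕ} (hn : 0 < n) :
    ∑ i ∈ Ico 1 n, 1 / sin (i * π / n) ^ 2 = ((n : ℝ) ^ 2 - 1) / 3 := by
  set ζ := Complex.exp (2 * π * Complex.I / n)
  have hζ : IsPrimitiveRoot ζ n := Complex.isPrimitiveRoot_exp n hn.ne'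
  have hterm : ∀ i : ℕ, ((1 / sin (i * π / n) ^ 2 : ℝ) : ℂ) =
      4 * ((1 - ζ ^ i) * (1 - (ζ ^ i)⁻¹))⁻¹ := fun i => by
    have hζi : ζ ^ i = Complex.exp (2 * ((i * π / n : ℝ) : ℂ) * Complex.I) := by
      rw [← Complex.exp_nat_mul]
      push_cast
      ring_nf
    rw [hζi, Complex.one_sub_exp_mul_one_sub_inv_exp]
    push_cast
    ring
  apply Complex.ofReal_injective
  rw [Complex.ofReal_sum, sum_congr rfl fun i _ => hterm i, ← mul_sum,
    hζ.sum_Ico_inv_one_sub_mul_one_sub_inv hn]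
  push_cast
  ring

/-- For every integer `n ≥ 3`, the Kirchhoff index of `G_n = P₂ ⊠ C_n`,
i.e. the number of vertices `2n` times the sum of the reciprocals of the nonzero Laplacian
eigenvalues `8·sin²(iπ/n)` (`i = 1, …, n−1`) and `6` (with multiplicity `n`), equals
`(n³ + 4n² − n)/12`. -/
theorem kirchhoffIndex_Gn (n : ℕ) (hn : 3 ≤ n) :
    2 * (n : ℝ) * ((∑ i ∈ Finset.Ico 1 n, 1 / (8 * Real.sin (i * Real.pi / n) ^ 2)) + n / 6) =
      ((n : ℝ) ^ 3 + 4 * n ^ 2 - n) / 12 := by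
  have hsum : ∑ i ∈ Finset.Ico 1 n, 1 / (8 * Real.sin (i * Real.pi / n) ^ 2) =
      ((n : ℝ) ^ 2 - 1) / 24 := by
    calc ∑ i ∈ Finset.Ico 1 n, 1 / (8 * Real.sin (i * Real.pi / n) ^ 2)
        = (∑ i ∈ Finset.Ico 1 n, 1 / Real.sin (i * Real.pi / n) ^ 2) / 8 := by
          rw [sum_div]
          exact sum_congr rfl fun i _ => by ring
      _ = ((n : ℝ) ^ 2 - 1) / 24 := by
          rw [Real.sum_Ico_one_div_sin_sq (by omega)]
          ring
  rw [hsum]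
  ring
end
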